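/- For X with standard logistic density, E[(X·tanh(X/2) − 1)^2] = (π^2+3)/9. -/

import Mathlib

/-!
Write `r = σ(-x) = 1/(1 + eˣ)`. Then `tanh (x/2) = 1 - 2r`, the logistic density is
`r(1 - r)` and `r' = -r(1 - r)`, so the integrand is a polynomial in `x` and `r`. It is even,
and on `(0, ∞)` repeated integration by parts expresses it as an exact derivative plus
`(2/3)·x·r`. The boundary terms give `1/6`, while expanding `r = Σ (-1)ⁿ e^{-(n+1)x}` gives
`∫₀^∞ x r = Σ (-1)ⁿ/(n+1)² = π²/12`. Hence the integral is `2 (1/6 + π²/18) = (π² + 3)/9`.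
-/

open Real Set MeasureTheory Filter Topology
open scoped Nat

lemma integral_pow_mul_exp_neg_mul_Ioi (k : ℕ) {c : ℝ} (hc : 0 < c) :
    ∫ x in Ioi (0 : ℝ), x ^ k * exp (-(c * x)) = k ! / c ^ (k + 1) := by
  have := integral_rpow_mul_exp_neg_mul_Ioi (a := k + 1) (by positivity) hc
  simp_rw [add_sub_cancel_right, rpow_natCast] at this
  rw [this, Gamma_nat_eq_factorial, ← Nat.cast_add_one, rpow_natCast]
  ring

lemma integrableOn_pow_mul_exp_neg_mul_Ioi (k : ℕ) {c : ℝ} (hc : 0 < c) :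
    IntegrableOn (fun x => x ^ k * exp (-(c * x))) (Ioi 0) :=
  .of_integral_ne_zero (by rw [integral_pow_mul_exp_neg_mul_Ioi k hc]; positivity)

lemma integrableOn_add_one_sq_mul_exp_neg_Ioi :
    IntegrableOn (fun x => (x + 1) ^ 2 * exp (-x)) (Ioi 0) := by
  have h (k : ℕ) := integrableOn_pow_mul_exp_neg_mul_Ioi k one_pos
  refine (((h 2).add ((h 1).const_mul 2)).add (h 0)).congr_fun (fun x _ => ?_) measurableSet_Ioi
  simp only [Pi.add_apply, one_mul, pow_one, pow_zero]
  ring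

lemma hasSum_one_div_nat_add_one_sq :
    HasSum (fun n : ℕ => 1 / ((n : ℝ) + 1) ^ 2) (π ^ 2 / 6) := by
  simpa using (hasSum_nat_add_iff' 1).mpr hasSum_zeta_two

lemma hasSum_neg_one_pow_div_nat_add_one_sq :
    HasSum (fun n : ℕ => (-1) ^ n / ((n : ℝ) + 1) ^ 2) (π ^ 2 / 12) := by
  set a : ℕ → ℝ := fun n => 1 / ((n : ℝ) + 1) ^ 2
  -- `(-1)ⁿ aₙ = aₙ - 2 aₙ [n odd]`, and the odd-indexed terms `1/(2k+2)²` sum to `ζ(2)/4`.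
  have ha : HasSum a (π ^ 2 / 6) := hasSum_one_div_nat_add_one_sq
  have hodd : HasSum (fun n => if Even n then 0 else a n) (0 + 4⁻¹ * (π ^ 2 / 6)) := by
    refine HasSum.even_add_odd (by simp) ((ha.mul_left 4⁻¹).congr_fun fun k => ?_)
    rw [if_neg (Nat.not_even_two_mul_add_one k)]
    simp only [a]
    push_cast
    field_simp
    ring
  rw [show π ^ 2 / 12 = π ^ 2 / 6 - 2 * (0 + 4⁻¹ * (π ^ 2 / 6)) by ring]
  refine (ha.sub (hodd.mul_left 2)).congr_fun fun n => ?_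
  rcases Nat.even_or_odd n with h | h
  · simp [h, h.neg_one_pow, a]
  · simp only [h.neg_one_pow, one_div, Nat.not_even_iff_odd.mpr h, ↓reduceIte, a]
    ring

namespace Real

lemma tanh_half_eq_two_mul_sigmoid_sub_one (x : ℝ) : tanh (x / 2) = 2 * sigmoid x - 1 := by
  have h : exp x = exp (x / 2) ^ 2 := by rw [← exp_nat_mul]; ring_nf
  rw [tanh_eq, sigmoid_def, exp_neg, exp_neg, h]
  field_simp
  ring

lemma exp_neg_div_one_add_exp_neg_sq (x : ℝ) :
    exp (-x) / (1 + exp (-x)) ^ 2 = sigmoid x * (1 - sigmoid x) := by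
  rw [sigmoid_def]
  field_simp
  ring

lemma sigmoid_le_exp (x : ℝ) : sigmoid x ≤ exp x := by
  rw [sigmoid_def, ← inv_inv (exp x), ← exp_neg]
  exact inv_anti₀ (exp_pos _) (by linarith [exp_pos (-x)])

lemma hasDerivAt_sigmoid_neg (x : ℝ) :
    HasDerivAt (fun y => sigmoid (-y)) (-(sigmoid (-x) * (1 - sigmoid (-x)))) x := by
  simpa [Function.comp_def] using (hasDerivAt_sigmoid (-x)).comp x (hasDerivAt_neg x)

lemma tendsto_pow_mul_sigmoid_neg_atTop (k : ℕ) :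
    Tendsto (fun x => x ^ k * sigmoid (-x)) atTop (𝓝 0) := by
  refine squeeze_zero' ?_ ?_ (tendsto_pow_mul_exp_neg_atTop_nhds_zero k)
  · filter_upwards [eventually_ge_atTop 0] with x hx
    exact mul_nonneg (pow_nonneg hx k) (sigmoid_nonneg _)
  · filter_upwards [eventually_ge_atTop 0] with x hx
    exact mul_le_mul_of_nonneg_left (sigmoid_le_exp _) (pow_nonneg hx k)

lemma integrableOn_mul_sigmoid_neg_Ioi : IntegrableOn (fun x => x * sigmoid (-x)) (Ioi 0) := by
  refine (integrableOn_pow_mul_exp_neg_mul_Ioi 1 one_pos).mono' (by fun_prop) ?_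
  filter_upwards [ae_restrict_mem measurableSet_Ioi] with x (hx : 0 < x)
  rw [norm_of_nonneg (mul_nonneg hx.le (sigmoid_nonneg _)), pow_one, one_mul]
  exact mul_le_mul_of_nonneg_left (sigmoid_le_exp _) hx.le

lemma hasSum_mul_sigmoid_neg {x : ℝ} (hx : 0 < x) :
    HasSum (fun n : ℕ => (-1) ^ n * (x * exp (-((n + 1) * x)))) (x * sigmoid (-x)) := by
  have hq : |-exp (-x)| < 1 := by
    rw [abs_neg, abs_of_pos (exp_pos _), exp_lt_one_iff]
    exact neg_lt_zero.mpr hx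
  have h := (hasSum_geometric_of_abs_lt_one hq).mul_left (x * exp (-x))
  rw [sub_neg_eq_add, ← sigmoid_def, mul_assoc, mul_comm (exp (-x)), sigmoid_mul_rexp_neg] at h
  refine h.congr_fun fun n => ?_
  rw [neg_pow (exp (-x)), ← exp_nat_mul, show -((n + 1) * x) = -x + n * -x by ring, exp_add]
  ring

lemma integral_mul_sigmoid_neg_Ioi : ∫ x in Ioi (0 : ℝ), x * sigmoid (-x) = π ^ 2 / 12 := by
  set F : ℕ → ℝ → ℝ := fun n x => (-1) ^ n * (x * exp (-((n + 1) * x)))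
  have hterm (n : ℕ) :
      ∫ x in Ioi (0 : ℝ), x * exp (-((n + 1) * x)) = 1 / ((n : ℝ) + 1) ^ 2 := by
    simpa using integral_pow_mul_exp_neg_mul_Ioi 1 (Nat.cast_add_one_pos n)
  have hint (n : ℕ) : IntegrableOn (fun x => x * exp (-((n + 1) * x))) (Ioi 0) := by
    simpa using integrableOn_pow_mul_exp_neg_mul_Ioi 1 (Nat.cast_add_one_pos n)
  have hnorm (n : ℕ) : ∫ x in Ioi (0 : ℝ), ‖F n x‖ = 1 / ((n : ℝ) + 1) ^ 2 := by
    rw [← hterm]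
    refine setIntegral_congr_fun measurableSet_Ioi fun x (hx : 0 < x) => ?_
    simp [F, abs_of_pos hx]
  have hsum := hasSum_integral_of_summable_integral_norm (μ := volume.restrict (Ioi 0))
    (fun n => (hint n).const_mul ((-1) ^ n))
    (hasSum_one_div_nat_add_one_sq.summable.congr fun n => (hnorm n).symm)
  have hpointwise :
      ∫ x in Ioi (0 : ℝ), ∑' n, F n x = ∫ x in Ioi (0 : ℝ), x * sigmoid (-x) :=
    setIntegral_congr_fun measurableSet_Ioi fun x hx => (hasSum_mul_sigmoid_neg hx).tsum_eq
  rw [← hpointwise]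
  refine hsum.unique (hasSum_neg_one_pow_div_nat_add_one_sq.congr_fun fun n => ?_)
  rw [integral_const_mul, hterm, mul_one_div]

end Real

noncomputable def fisherScaleIntegrand (x : ℝ) : ℝ :=
  (x * (1 - 2 * sigmoid (-x)) - 1) ^ 2 * (sigmoid (-x) * (1 - sigmoid (-x)))

noncomputable def fisherScalePrimitive (x : ℝ) : ℝ :=
  x ^ 2 * sigmoid (-x) * (-(4 / 3) * sigmoid (-x) ^ 2 + 2 * sigmoid (-x) - 1)
    + x * sigmoid (-x) * (2 / 3 - 2 / 3 * sigmoid (-x)) - sigmoid (-x) / 3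

lemma fisherScaleIntegrand_eq (x : ℝ) :
    (x * tanh (x / 2) - 1) ^ 2 * (exp (-x) / (1 + exp (-x)) ^ 2) = fisherScaleIntegrand x := by
  rw [tanh_half_eq_two_mul_sigmoid_sub_one, exp_neg_div_one_add_exp_neg_sq, fisherScaleIntegrand,
    sigmoid_neg]
  ring

lemma fisherScaleIntegrand_abs (x : ℝ) : fisherScaleIntegrand |x| = fisherScaleIntegrand x := by
  rcases abs_choice x with h | h
  · rw [h]
  · rw [h, fisherScaleIntegrand, fisherScaleIntegrand, neg_neg, sigmoid_neg x]
    ring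

lemma continuous_fisherScaleIntegrand : Continuous fisherScaleIntegrand := by
  unfold fisherScaleIntegrand
  fun_prop

lemma fisherScaleIntegrand_nonneg (x : ℝ) : 0 ≤ fisherScaleIntegrand x :=
  mul_nonneg (sq_nonneg _) (mul_nonneg (sigmoid_nonneg _) (sub_nonneg.mpr (sigmoid_le_one _)))

lemma fisherScaleIntegrand_le {x : ℝ} (hx : 0 ≤ x) :
    fisherScaleIntegrand x ≤ (x + 1) ^ 2 * exp (-x) := by
  have hr₀ := sigmoid_nonneg (-x)
  have hr₁ := sigmoid_le_one (-x)
  have hsq : (x * (1 - 2 * sigmoid (-x)) - 1) ^ 2 ≤ (x + 1) ^ 2 :=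
    sq_le_sq' (by nlinarith) (by nlinarith)
  have hdens : sigmoid (-x) * (1 - sigmoid (-x)) ≤ exp (-x) := by
    nlinarith [sigmoid_le_exp (-x)]
  exact mul_le_mul hsq hdens (by nlinarith) (sq_nonneg _)

lemma integrableOn_fisherScaleIntegrand_Ioi : IntegrableOn fisherScaleIntegrand (Ioi 0) := by
  refine integrableOn_add_one_sq_mul_exp_neg_Ioi.mono'
    continuous_fisherScaleIntegrand.aestronglyMeasurable ?_
  filter_upwards [ae_restrict_mem measurableSet_Ioi] with x (hx : 0 < x)
  rw [norm_of_nonneg (fisherScaleIntegrand_nonneg x)]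
  exact fisherScaleIntegrand_le hx.le

lemma hasDerivAt_fisherScalePrimitive (x : ℝ) :
    HasDerivAt fisherScalePrimitive (fisherScaleIntegrand x - 2 / 3 * (x * sigmoid (-x))) x := by
  have hr := hasDerivAt_sigmoid_neg x
  have hx := hasDerivAt_id' x
  have h : HasDerivAt fisherScalePrimitive _ x :=
    ((((hx.pow 2).mul hr).mul (((hr.pow 2).const_mul (-(4 / 3))).add (hr.const_mul 2)
      |>.sub_const 1)).add ((hx.mul hr).mul ((hr.const_mul (2 / 3)).const_sub (2 / 3)))).sub
      (hr.div_const 3)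
  refine h.congr_deriv ?_
  simp only [fisherScaleIntegrand, Pi.add_apply, Pi.mul_apply, Pi.pow_apply]
  ring

lemma tendsto_fisherScalePrimitive_atTop : Tendsto fisherScalePrimitive atTop (𝓝 0) := by
  have h (k : ℕ) := tendsto_pow_mul_sigmoid_neg_atTop k
  have hr : Tendsto (fun x => sigmoid (-x)) atTop (𝓝 0) := by simpa using h 0
  have h1 : Tendsto (fun x => x * sigmoid (-x)) atTop (𝓝 0) := by simpa using h 1
  have := ((h 2).mul (((hr.pow 2).const_mul (-(4 / 3))).add (hr.const_mul 2) |>.sub_const 1)).add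
    (h1.mul ((hr.const_mul (2 / 3)).const_sub (2 / 3))) |>.sub (hr.div_const 3)
  unfold fisherScalePrimitive
  simpa using this

lemma fisherScalePrimitive_zero : fisherScalePrimitive 0 = -1 / 6 := by
  norm_num [fisherScalePrimitive, sigmoid_zero]

lemma integral_fisherScaleIntegrand_Ioi :
    ∫ x in Ioi (0 : ℝ), fisherScaleIntegrand x = π ^ 2 / 18 + 1 / 6 := by
  have hxr := integrableOn_mul_sigmoid_neg_Ioi.const_mul (2 / 3)
  have hderiv := integrableOn_fisherScaleIntegrand_Ioi.sub hxr
  have hftc := integral_Ioi_of_hasDerivAt_of_tendsto'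
    (fun x _ => hasDerivAt_fisherScalePrimitive x) hderiv tendsto_fisherScalePrimitive_atTop
  rw [integral_sub integrableOn_fisherScaleIntegrand_Ioi hxr, integral_const_mul,
    integral_mul_sigmoid_neg_Ioi, fisherScalePrimitive_zero] at hftc
  linarith

theorem logistic_fisher_scale :
    ∫ x : ℝ, (x * Real.tanh (x/2) - 1)^2 * (Real.exp (-x) / (1 + Real.exp (-x))^2) =
      (Real.pi^2 + 3) / 9 := by
  simp_rw [fisherScaleIntegrand_eq]
  calc ∫ x, fisherScaleIntegrand x = ∫ x, fisherScaleIntegrand |x| := by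
        simp_rw [fisherScaleIntegrand_abs]
    _ = 2 * ∫ x in Ioi 0, fisherScaleIntegrand x := integral_comp_abs
    _ = (π ^ 2 + 3) / 9 := by
        rw [integral_fisherScaleIntegrand_Ioi]
        ring
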